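/- Let Γ be a finite simple graph with an orientation o, let A be a vertex of Γ, and let o′ be the orientation obtained from o by reversing the direction of every edge incident to A (all other edges unchanged). Then every cycle of even length in Γ has the same sign with respect to o as with respect to o′. -/

import Mathlib

open Finset
open scoped Classical

/-- The cyclic successor of an element of `Fin m`. -/
def cyclicSucc {m : ℕ} (a : Fin m) : Fin m :=
  ⟨((a : ℕ) + 1) % m, Nat.mod_lt _ a.pos⟩

/-- The cyclic predecessor of an element of `Fin m`. -/
def cyclicPred {m : ℕ} (a : Fin m) : Fin m :=
  ⟨((a : ℕ) + (m - 1)) % m, Nat.mod_lt _ a.pos⟩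

/-- `f : Fin l → V` traces an `l`-cycle of `G`: it is injective and cyclically
consecutive vertices are adjacent. -/
def IsCycleMap {V : Type} (G : SimpleGraph V) (l : ℕ) (f : Fin l → V) : Prop :=
  Function.Injective f ∧ ∀ i : Fin l, G.Adj (f i) (f (cyclicSucc i))

/-- The number `E_l(G)` of `l`-cycles of `G`, counted up to rotation and reflection
(each such cycle is traced by exactly `2 * l` maps `Fin l → V`). -/
noncomputable def cycleCount {V : Type} [Fintype V] (G : SimpleGraph V) (l : ℕ) : ℕ :=
  (Finset.univ.filter (fun f : Fin l → V => IsCycleMap G l f)).card / (2 * l)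

/-- `o` is an orientation of `G`: every edge gets exactly one direction. -/
def IsOrientation {V : Type} (G : SimpleGraph V) (o : V → V → Prop) : Prop :=
  ∀ ⦃x y : V⦄, G.Adj x y → (o x y ↔ ¬ o y x)

/-- The sign of a cycle map with respect to a direction relation `o`:
`+1` iff the number of edges agreeing with the traversal is even. -/
noncomputable def cycleSign {V : Type} {l : ℕ} (o : V → V → Prop) (f : Fin l → V) : ℤ :=
  (-1) ^ (Finset.univ.filter (fun i : Fin l => o (f i) (f (cyclicSucc i)))).card

/-- The sum of signs of all `l`-cycles of `G` (counted up to rotation and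
reflection) with respect to the direction relation `o`. -/
noncomputable def signedCycleSum {V : Type} [Fintype V] (G : SimpleGraph V)
    (o : V → V → Prop) (l : ℕ) : ℤ :=
  (∑ f ∈ Finset.univ.filter (fun f : Fin l → V => IsCycleMap G l f),
    cycleSign o f) / (2 * (l : ℤ))

/-- The graph `Γ'_AB`: toggle the adjacency between the vertices `A` and `B`. -/
def toggleEdge {V : Type} (G : SimpleGraph V) (A B : V) : SimpleGraph V where
  Adj x y := x ≠ y ∧ (G.Adj x y ↔ ¬((x = A ∧ y = B) ∨ (x = B ∧ y = A)))
  symm := by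
    refine ⟨?_⟩
    intro x y h
    obtain ⟨h1, h2⟩ := h
    refine ⟨h1.symm, ?_⟩
    rw [G.adj_comm]
    tauto
  loopless := ⟨by intro x h; exact h.1 rfl⟩

/-- The graph `Γ̃_AB`: toggle the adjacency between `A` and every vertex
`C ∉ {A, B}` adjacent to `B` in `Γ`. -/
def tildeGraph {V : Type} (G : SimpleGraph V) (A B : V) : SimpleGraph V where
  Adj x y := x ≠ y ∧
    (G.Adj x y ↔ ¬((x = A ∧ y ≠ B ∧ G.Adj y B) ∨ (y = A ∧ x ≠ B ∧ G.Adj x B)))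
  symm := by
    refine ⟨?_⟩
    intro x y h
    obtain ⟨h1, h2⟩ := h
    refine ⟨h1.symm, ?_⟩
    rw [G.adj_comm]
    tauto
  loopless := ⟨by intro x h; exact h.1 rfl⟩

/-- A chord diagram of order `n`: a partition of the `2 * n` cyclically ordered
points `0, 1, …, 2n - 1` into `n` two-element blocks (chords), here recorded by
the function assigning to each point its chord. -/
structure ChordDiagram (n : ℕ) where
  chord : Fin (2 * n) → Fin n
  fiber_two : ∀ i : Fin n, (Finset.univ.filter (fun x => chord x = i)).card = 2

namespace ChordDiagram

variable {n : ℕ}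

/-- The pair of endpoints of the chord `i`. -/
def endpoints (d : ChordDiagram n) (i : Fin n) : Finset (Fin (2 * n)) :=
  Finset.univ.filter (fun x => d.chord x = i)

lemma endpoints_nonempty (d : ChordDiagram n) (i : Fin n) : (d.endpoints i).Nonempty := by
  rw [← Finset.card_pos, endpoints, d.fiber_two]
  norm_num

/-- The smaller endpoint of the chord `i`. -/
def lo (d : ChordDiagram n) (i : Fin n) : Fin (2 * n) :=
  (d.endpoints i).min' (d.endpoints_nonempty i)

/-- The larger endpoint of the chord `i`. -/
def hi (d : ChordDiagram n) (i : Fin n) : Fin (2 * n) :=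
  (d.endpoints i).max' (d.endpoints_nonempty i)

/-- Chords `i` and `j` cross: exactly one endpoint of `j` lies strictly between
the two endpoints of `i`. -/
def Crosses (d : ChordDiagram n) (i j : Fin n) : Prop :=
  Xor' (d.lo i < d.lo j ∧ d.lo j < d.hi i) (d.lo i < d.hi j ∧ d.hi j < d.hi i)

/-- The intersection graph `γ(d)` of the chord diagram `d`. -/
def interGraph (d : ChordDiagram n) : SimpleGraph (Fin n) where
  Adj i j := i ≠ j ∧ (d.Crosses i j ∨ d.Crosses j i)
  symm := ⟨by intro i j h; exact ⟨h.1.symm, h.2.symm⟩⟩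
  loopless := ⟨by intro i h; exact h.1 rfl⟩

lemma chord_lo (d : ChordDiagram n) (i : Fin n) : d.chord (d.lo i) = i := by
  have h := (d.endpoints i).min'_mem (d.endpoints_nonempty i)
  exact (Finset.mem_filter.mp h).2

/-- An orientation of a chord diagram: a choice of a beginning point for each
chord (the other endpoint being its end). -/
def Orientation (d : ChordDiagram n) : Type :=
  { b : Fin n → Fin (2 * n) // ∀ i, d.chord (b i) = i }

/-- The end of the chord `i`, i.e. its endpoint other than the beginning. -/
def endOf (d : ChordDiagram n) (o : d.Orientation) (i : Fin n) : Fin (2 * n) :=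
  if o.1 i = d.lo i then d.hi i else d.lo i

/-- The point `z` lies on the arc going in the positive direction from `a` to `b`. -/
def InArc {m : ℕ} (a b z : Fin m) : Prop :=
  if a < b then a < z ∧ z < b else a < z ∨ z < b

/-- The direction induced by an orientation of the chords on the edges of the
intersection graph: the edge between `i` and `j` is directed from `i` to `j`
iff the beginning of `j` lies on the arc going in the positive direction from
the beginning of `i` to the end of `i`. -/
def dir (d : ChordDiagram n) (o : d.Orientation) (i j : Fin n) : Prop :=
  InArc (o.1 i) (d.endOf o i) (o.1 j)

/-- The canonical orientation: every chord begins at its smaller endpoint. -/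
def canonical (d : ChordDiagram n) : d.Orientation :=
  ⟨d.lo, d.chord_lo⟩

end ChordDiagram

/-- The weight system `R_k`: the sum of the signs of the `2k`-cycles of the
directed intersection graph (for the canonical orientation of the chords). -/
noncomputable def Rk (k : ℕ) {n : ℕ} (d : ChordDiagram n) : ℤ :=
  signedCycleSum d.interGraph (d.dir d.canonical) (2 * k)

/-- When the point at position `p` is moved to position `q` (keeping the relative
order of all the other points), `moveFun p q r` is the old position of the point
occupying the position `r` after the move. -/
def moveFun {m : ℕ} (p q : Fin m) (r : Fin m) : Fin m :=
  if r = q then p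
  else if h : (p : ℕ) ≤ (r : ℕ) ∧ (r : ℕ) < (q : ℕ) then
    ⟨(r : ℕ) + 1, by have := q.isLt; omega⟩
  else if h' : (q : ℕ) < (r : ℕ) ∧ (r : ℕ) ≤ (p : ℕ) then
    ⟨(r : ℕ) - 1, by have := r.isLt; omega⟩
  else r

/-- The invariant `w_C`: `1` if the adjacency matrix of the graph over `ZMod 2`
is nondegenerate, `0` otherwise. -/
noncomputable def wC {V : Type} [Fintype V] (G : SimpleGraph V) : ℤ :=
  if (G.adjMatrix (ZMod 2)).det ≠ 0 then 1 else 0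

/-- All set partitions of `Fin n` into nonempty blocks. -/
noncomputable def finPartitions (n : ℕ) : Finset (Finset (Finset (Fin n))) :=
  Finset.univ.filter (fun P =>
    (∀ s ∈ P, s.Nonempty) ∧ ∀ x : Fin n, ∃! s, s ∈ P ∧ x ∈ s)

/-- A `4`-invariant of finite simple graphs: an integer-valued, isomorphism
invariant function satisfying the `4`-term relation for graphs. -/
structure FourInvariant where
  val : ∀ n : ℕ, SimpleGraph (Fin n) → ℤ
  iso_invariant : ∀ {n m : ℕ} (G : SimpleGraph (Fin n)) (H : SimpleGraph (Fin m)),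
    Nonempty (G ≃g H) → val n G = val m H
  four_term : ∀ (n : ℕ) (G : SimpleGraph (Fin n)) (A B : Fin n), A ≠ B →
    val n G - val n (toggleEdge G A B) =
      val n (tildeGraph G A B) - val n (toggleEdge (tildeGraph G A B) A B)

/-- The `5`-wheel: a `5`-cycle on the vertices `0, …, 4` together with the hub `5`
adjacent to all five cycle vertices. -/
def wheel5 : SimpleGraph (Fin 6) :=
  SimpleGraph.fromRel (fun x y =>
    ((x : ℕ) = 5 ∧ (y : ℕ) < 5) ∨
    ((x : ℕ) < 5 ∧ (y : ℕ) < 5 ∧ (y : ℕ) = ((x : ℕ) + 1) % 5))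

/-- The triangular prism: two triangles `{0, 1, 2}` and `{3, 4, 5}` joined by the
perfect matching `i — i + 3`. -/
def prism : SimpleGraph (Fin 6) :=
  SimpleGraph.fromRel (fun x y =>
    ((x : ℕ) < 3 ∧ (y : ℕ) < 3 ∧ x ≠ y) ∨
    (3 ≤ (x : ℕ) ∧ 3 ≤ (y : ℕ) ∧ x ≠ y) ∨
    ((y : ℕ) = (x : ℕ) + 3))

lemma cyclicSucc_eq_finRotate {m : ℕ} (i : Fin m) : cyclicSucc i = finRotate m i := by
  cases m with
  | zero => exact i.elim0
  | succ m =>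
    ext
    simp [finRotate_apply, cyclicSucc, Fin.val_add]

lemma prod_comp_cyclicSucc {M : Type*} [CommMonoid M] {m : ℕ} (g : Fin m → M) :
    ∏ i, g (cyclicSucc i) = ∏ i, g i := by
  simp_rw [cyclicSucc_eq_finRotate]
  exact Equiv.prod_comp (finRotate m) g

lemma neg_one_pow_card_filter {ι : Type*} [Fintype ι] (p : ι → Prop) :
    (-1 : ℤ) ^ #{i | p i} = ∏ i, if p i then -1 else 1 := by
  rw [← Finset.prod_filter, Finset.prod_const]

lemma ite_neg_one_eq_mul_of_iff_iff {p q a b : Prop} (h : (q ↔ p) ↔ (a ↔ b)) :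
    (if q then (-1 : ℤ) else 1) =
      (if p then -1 else 1) * ((if a then -1 else 1) * (if b then -1 else 1)) := by
  by_cases hp : p <;> by_cases ha : a <;> by_cases hb : b <;> simp_all

lemma cycleSign_eq_prod {V : Type} {l : ℕ} (o : V → V → Prop) (f : Fin l → V) :
    cycleSign o f = ∏ i, if o (f i) (f (cyclicSucc i)) then -1 else 1 :=
  neg_one_pow_card_filter _

/-- Along a closed walk the factors `ε (f i) * ε (f (i + 1))`, where `ε = ±1` records membership
in `S`, telescope to `(∏ ε)² = 1`. -/
theorem cycleSign_eq_of_switch {V : Type} {l : ℕ} (o o' : V → V → Prop) (S : V → Prop)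
    (f : Fin l → V)
    (h : ∀ i, (o' (f i) (f (cyclicSucc i)) ↔ o (f i) (f (cyclicSucc i))) ↔
      (S (f i) ↔ S (f (cyclicSucc i)))) :
    cycleSign o' f = cycleSign o f := by
  set ε : V → ℤ := fun v => if S v then -1 else 1
  have hε : ∏ i, ε (f i) * ε (f i) = 1 :=
    Finset.prod_eq_one fun i _ => by by_cases hS : S (f i) <;> simp [ε, hS]
  rw [cycleSign_eq_prod, cycleSign_eq_prod]
  calc ∏ i, (if o' (f i) (f (cyclicSucc i)) then (-1 : ℤ) else 1)
      = ∏ i, (if o (f i) (f (cyclicSucc i)) then (-1 : ℤ) else 1) *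
          (ε (f i) * ε (f (cyclicSucc i))) :=
        Finset.prod_congr rfl fun i _ => ite_neg_one_eq_mul_of_iff_iff (h i)
    _ = (∏ i, if o (f i) (f (cyclicSucc i)) then (-1 : ℤ) else 1) *
          ∏ i, ε (f i) * ε (f i) := by
        rw [Finset.prod_mul_distrib, Finset.prod_mul_distrib, Finset.prod_mul_distrib,
          prod_comp_cyclicSucc (fun i => ε (f i))]
    _ = ∏ i, if o (f i) (f (cyclicSucc i)) then (-1 : ℤ) else 1 := by
        rw [hε, mul_one]

theorem cycleSign_eq_of_flip_at_vertex_general {V : Type} (G : SimpleGraph V)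
    (o o' : V → V → Prop) (A : V)
    (hflip : ∀ x y, G.Adj x y → (x = A ∨ y = A) → (o' x y ↔ ¬ o x y))
    (hkeep : ∀ x y, G.Adj x y → x ≠ A → y ≠ A → (o' x y ↔ o x y))
    (l : ℕ) (f : Fin l → V) (hf : IsCycleMap G l f) :
    cycleSign o f = cycleSign o' f := by
  refine (cycleSign_eq_of_switch o o' (· = A) f fun i => ?_).symm
  have hadj := hf.2 i
  by_cases hA : f i = A ∨ f (cyclicSucc i) = A
  · simp only [hflip _ _ hadj hA, not_iff_self, false_iff]
    exact fun hiff => hadj.ne (by grind)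
  · push Not at hA
    simp [hkeep _ _ hadj hA.1 hA.2, hA.1, hA.2]

theorem cycleSign_eq_of_flip_at_vertex {V : Type} (G : SimpleGraph V)
    (o o' : V → V → Prop) (ho : IsOrientation G o) (ho' : IsOrientation G o') (A : V)
    (hflip : ∀ x y, G.Adj x y → (x = A ∨ y = A) → (o' x y ↔ ¬ o x y))
    (hkeep : ∀ x y, G.Adj x y → x ≠ A → y ≠ A → (o' x y ↔ o x y))
    (l : ℕ) (hl : Even l) (f : Fin l → V) (hf : IsCycleMap G l f) :
    cycleSign o f = cycleSign o' f :=
  cycleSign_eq_of_flip_at_vertex_general G o o' A hflip hkeep l f hf
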